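/- arXiv:2404.02371 — 2 statements merged into one kernel-verified Lean document; each statement's English description precedes it below -/
import Mathlib

section
/- Let f be a piecewise contraction on a compact set X ⊂ ℝ^d, with maximal partition P(f), attractor Λ(f) and discontinuity set Δ(f). If Λ(f) ∩ Δ(f) = ∅, then f is Markov, i.e. its maximal partition stabilises. -/
open Set Metric Topology Function
open scoped ENNReal

noncomputable section

attribute [local instance] Classical.propDecidable

/-- Euclidean space `ℝ^d`. -/
abbrev Euc (d : ℕ) : Type := EuclideanSpace ℝ (Fin d)

/-- A piecewise contraction of a set `X ⊆ ℝ^d`, together with its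
partition of continuity `P` (intended to be the maximal partition). -/
structure PWC (d : ℕ) (X : Set (Euc d)) where
  map : Euc d → Euc d
  mapsTo : MapsTo map X X
  image_closure : closure (map '' X) ⊆ interior X
  lam : ℝ
  lam_pos : 0 < lam
  lam_lt_one : lam < 1
  m : ℕ
  m_pos : 0 < m
  P : Fin m → Set (Euc d)
  P_nonempty : ∀ i, (P i).Nonempty
  P_subset : ∀ i, P i ⊆ X
  P_open : ∀ i, IsOpen (P i)
  P_disjoint : ∀ i j, i ≠ j → Disjoint (P i) (P j)
  cover_eq : X = ⋃ i, closure (P i)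
  contracts : ∀ i, ∀ x ∈ P i, ∀ y ∈ P i, dist (map x) (map y) ≤ lam * dist x y
  Pt : Fin m → Set (Euc d)
  P_sub_Pt : ∀ i, P i ⊆ Pt i
  Pt_sub_cl : ∀ i, Pt i ⊆ closure (P i)
  Pt_disjoint : ∀ i j, i ≠ j → Disjoint (Pt i) (Pt j)
  Pt_cover : X = ⋃ i, Pt i
  contOn : ∀ i, ContinuousOn map (Pt i)

namespace PWC

variable {d : ℕ} {X : Set (Euc d)}

/-- `Δ(f)`: the union of the set of discontinuities of `f` (as a map of `X`)
with the boundary of `X`. -/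
def Delta (f : PWC d X) : Set (Euc d) :=
  {x ∈ X | ¬ ContinuousWithinAt f.map X x} ∪ frontier X

/-- The partition `P(f)` is maximal: `∂P(f) = Δ(f)`. -/
def IsMaximal (f : PWC d X) : Prop :=
  (⋃ i, frontier (f.P i)) = f.Delta

/-- The attractor `Λ(f) = ⋂ₙ closure (fⁿ(X))`. -/
def att (f : PWC d X) : Set (Euc d) :=
  ⋂ n : ℕ, closure (f.map^[n] '' X)

/-- The partition `P(fⁿ)` associated to the `n`-th iterate: its elements are
the nonempty sets `P_{i₀} ∩ f⁻¹(P_{i₁}) ∩ ⋯ ∩ f^{-(n-1)}(P_{i_{n-1}})`. -/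
def partN (f : PWC d X) (n : ℕ) : Set (Set (Euc d)) :=
  {Q | Q.Nonempty ∧ ∃ w : Fin n → Fin f.m,
    Q = ⋂ j : Fin n, f.map^[(j : ℕ)] ⁻¹' f.P (w j)}

/-- The maximal partition stabilises at time `N`. -/
def StabilisesAt (f : PWC d X) (N : ℕ) : Prop :=
  ∀ Q ∈ f.partN N, ∃ Q' ∈ f.partN N, closure (f.map^[N] '' Q) ⊆ Q'

/-- `f` is Markov: its partition stabilises at some time. -/
def Markov (f : PWC d X) : Prop :=
  ∃ N : ℕ, 0 < N ∧ f.StabilisesAt N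

/-- `N` is the stabilisation time of `f`: the least positive time at which
the partition stabilises. -/
def IsStabTime (f : PWC d X) (N : ℕ) : Prop :=
  0 < N ∧ f.StabilisesAt N ∧ ∀ k, 0 < k → k < N → ¬ f.StabilisesAt k

/-- `f` is piecewise injective: each branch extends to an injective contraction
on a neighbourhood of the closure of the corresponding partition element. -/
def PiecewiseInjective (f : PWC d X) : Prop :=
  ∀ i, ∃ U : Set (Euc d), IsOpen U ∧ closure (f.P i) ⊆ U ∧
    ∃ (ft : Euc d → Euc d) (c : ℝ), c < 1 ∧ InjOn ft U ∧
      (∀ x ∈ U, ∀ y ∈ U, dist (ft x) (ft y) ≤ c * dist x y) ∧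
      EqOn ft f.map (f.P i)

/-- The partition element `P i` is wandering. -/
def WanderingIdx (f : PWC d X) (i : Fin f.m) : Prop :=
  ∃ M : ℕ, ∀ n, M < n → Disjoint (f.map^[n] '' f.P i) (f.P i)

/-- `NW(f)`: the union of the non-wandering partition elements. -/
def NW (f : PWC d X) : Set (Euc d) :=
  ⋃ i ∈ {i : Fin f.m | ¬ f.WanderingIdx i}, f.P i

/-- `f` is piecewise strongly contracting: `λ^p · #P(f^p) < 1/2` for some `p`. -/
def Strongly (f : PWC d X) : Prop :=
  ∃ p : ℕ, 0 < p ∧ f.lam ^ p * ((f.partN p).ncard : ℝ) < 1 / 2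

end PWC

/-- Homeomorphisms of `X` onto itself. -/
def HX {d : ℕ} (X : Set (Euc d)) : Set (Euc d → Euc d) :=
  {ψ | MapsTo ψ X X ∧ ContinuousOn ψ X ∧
    ∃ φ : Euc d → Euc d, MapsTo φ X X ∧ ContinuousOn φ X ∧
      (∀ x ∈ X, φ (ψ x) = x) ∧ (∀ x ∈ X, ψ (φ x) = x)}

/-- `H(P(fⁿ),P(gⁿ))`: homeomorphisms of `X` matching the partitions of the
`n`-th iterates. -/
def HsetN {d : ℕ} {X : Set (Euc d)} (f g : PWC d X) (n : ℕ) : Set (Euc d → Euc d) :=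
  {ψ | ψ ∈ HX X ∧ ∀ Q ∈ f.partN n, ψ '' Q ∈ g.partN n}

/-- The distance `ρ(fⁿ,gⁿ)`. -/
noncomputable def rhoN {d : ℕ} {X : Set (Euc d)} (f g : PWC d X) (n : ℕ) : ℝ :=
  if (HsetN f g n).Nonempty then
    ⨅ ψ : HsetN f g n,
      ((⨆ x : X, dist (ψ.1 x.1) x.1) +
        ⨆ x : X, dist (f.map^[n] x.1) (g.map^[n] (ψ.1 x.1)))
  else 2 * diam X

/-- The distance `ρ(f,g)` between piecewise contractions (with their maximal
partitions). -/
noncomputable def rho {d : ℕ} {X : Set (Euc d)} (f g : PWC d X) : ℝ :=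
  rhoN f g 1

/-- The distance `d₁(f,g) = Σₙ σⁿ ρ(fⁿ,gⁿ)`. -/
noncomputable def d1 {d : ℕ} {X : Set (Euc d)} (σ : ℝ) (f g : PWC d X) : ℝ :=
  ∑' n : ℕ, σ ^ (n + 1) * rhoN f g (n + 1)

/-- A finite family of `C²` codimension-one submanifolds of `ℝ^d` (given as
regular level sets), pairwise transversal. -/
structure BoundaryData (d l : ℕ) where
  M : Fin l → Set (Euc d)
  U : Fin l → Set (Euc d)
  g : Fin l → Euc d → ℝ
  openU : ∀ j, IsOpen (U j)
  smooth : ∀ j, ContDiffOn ℝ 2 (g j) (U j)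
  reg : ∀ j, ∀ y ∈ U j, fderiv ℝ (g j) y ≠ 0
  level : ∀ j, M j = {y ∈ U j | g j y = 0}
  transversal : ∀ j k, j ≠ k → ∀ x ∈ M j ∩ M k,
    LinearIndependent ℝ ![fderiv ℝ (g j) x, fderiv ℝ (g k) x]

/-- `f` is a piecewise smooth contraction: each branch has an injective `C³`
extension with finite `C³` norm and `C¹` inverse, and the boundaries of the
partition elements are contained in finitely many pairwise transversal `C²`
`(d-1)`-dimensional manifolds. -/
def PWC.PiecewiseSmooth {d : ℕ} {X : Set (Euc d)} (f : PWC d X) : Prop :=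
  (∀ i, ∃ U : Set (Euc d), IsOpen U ∧ closure (f.P i) ⊆ U ∧
    ∃ ft : Euc d → Euc d, ContDiff ℝ 3 ft ∧
      (∀ n : ℕ, n ≤ 3 → ∃ C : ℝ, ∀ x, ‖iteratedFDeriv ℝ n ft x‖ ≤ C) ∧
      InjOn ft U ∧
      (∀ x ∈ U, ∀ y ∈ U, dist (ft x) (ft y) ≤ f.lam * dist x y) ∧
      EqOn ft f.map (f.P i) ∧
      ∃ gt : Euc d → Euc d, (∀ x ∈ U, gt (ft x) = x) ∧
        ContDiffOn ℝ 1 gt (ft '' U) ∧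
        ∃ C : ℝ, ∀ y ∈ ft '' U, ‖fderivWithin ℝ gt (ft '' U) y‖ ≤ C) ∧
  ∃ (l : ℕ) (B : BoundaryData d l), ∀ i, frontier (f.P i) ⊆ ⋃ j, B.M j

/-- The distance `d₂(f,g)`: the sup over the partition elements of the `C²`
distance between `f` and `g` if the two maximal partitions coincide, and `∞`
otherwise. -/
noncomputable def d2 {d : ℕ} {X : Set (Euc d)} (f g : PWC d X) : ℝ≥0∞ :=
  if Set.range f.P = Set.range g.P then
    ⨆ (i : Fin f.m) (x : f.P i), ENNReal.ofReal
      (∑ n ∈ Finset.range 3,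
        ‖iteratedFDerivWithin ℝ n (fun y => f.map y - g.map y) (f.P i) x.1‖)
  else ⊤

/-- Composition `φ_{σ₁} ∘ ⋯ ∘ φ_{σ_p}` of the maps of an IFS along a finite word. -/
def wordComp {d : ℕ} {I : Type*} (φ : I → Euc d → Euc d) : List I → (Euc d → Euc d)
  | [] => id
  | i :: l => φ i ∘ wordComp φ l

/-- Composition of the maps of an IFS along a word `w : Fin n → I`. -/
def wordCompF {d n : ℕ} {I : Type*} (φ : I → Euc d → Euc d) (w : Fin n → I) :
    Euc d → Euc d :=
  wordComp φ (List.ofFn w)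

/-- The attractor `Λ(Φ)` of an IFS: the union over all symbolic sequences of
`⋂ₙ φ_{σ₁} ∘ ⋯ ∘ φ_{σₙ}(Y)`. -/
def IFSattractor {d : ℕ} {I : Type*} (φ : I → Euc d → Euc d) (Y : Set (Euc d)) :
    Set (Euc d) :=
  {x | ∃ σ : ℕ → I, ∀ n : ℕ, x ∈ wordCompF φ (fun j : Fin n => σ j.1) '' Y}

/-- The set `D_σ(Φ)` of points of `Y` whose partial orbits along the word `σ`
visit the prescribed neighbourhoods `Vm` of the partition elements. -/
def Dset {d : ℕ} {I : Type*} (φ : I → Euc d → Euc d) (Vm : I → Set (Euc d))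
    (Y : Set (Euc d)) (l : List I) : Set (Euc d) :=
  {x | x ∈ Y ∧ ∀ (a : List I) (b : I) (c : List I),
    l = a ++ b :: c → wordComp φ c x ∈ Vm b}

/-- The word `l` is admissible: the image of `D_σ(Φ)` meets some boundary
manifold `ψ_i(D_i)`. -/
def Admissible {d l₀ : ℕ} {I : Type*} (φ : I → Euc d → Euc d) (Vm : I → Set (Euc d))
    (Y : Set (Euc d)) (D : Fin l₀ → Set (Euc (d - 1)))
    (ψb : Fin l₀ → Euc (d - 1) → Euc d) (l : List I) : Prop :=
  ∃ j : Fin l₀, (wordComp φ l '' Dset φ Vm Y l ∩ ψb j '' D j).Nonempty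

/-- `D^N(Φ)`: the union of the local preimages of the boundary manifolds under
admissible compositions of at most `N` maps of the IFS. -/
def DNset {d l₀ : ℕ} {I : Type*} (φ : I → Euc d → Euc d) (Vm : I → Set (Euc d))
    (Y : Set (Euc d)) (D : Fin l₀ → Set (Euc (d - 1)))
    (ψb : Fin l₀ → Euc (d - 1) → Euc d) (N : ℕ) : Set (Euc d) :=
  ⋃ (j : Fin l₀), ⋃ (l : List I), ⋃ (_ : l.length ≤ N),
    {x ∈ Dset φ Vm Y l | wordComp φ l x ∈ ψb j '' D j}

/-- `D^N_δ(Φ)`: the closed `δ`-neighbourhood of `D^N(Φ)`. -/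
def DNnbhd {d l₀ : ℕ} {I : Type*} (φ : I → Euc d → Euc d) (Vm : I → Set (Euc d))
    (Y : Set (Euc d)) (D : Fin l₀ → Set (Euc (d - 1)))
    (ψb : Fin l₀ → Euc (d - 1) → Euc d) (N : ℕ) (δ : ℝ) : Set (Euc d) :=
  {y | ∃ x ∈ DNset φ Vm Y D ψb N, dist y x ≤ δ}

/-- The `C^k` norm of a map `ℝ^d → ℝ^d`. -/
noncomputable def cNorm {d : ℕ} (k : ℕ) (F : Euc d → Euc d) : ℝ :=
  ∑ n ∈ Finset.range (k + 1), ⨆ x : Euc d, ‖iteratedFDeriv ℝ n F x‖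

end

/-!
The sets `closure (fⁿ(X))` are compact and decrease to `Λ(f)`, which misses the closed set `Δ(f)`;
hence some `closure (f^{n₁}(X))` already has a uniform distance `δ > 0` from `Δ(f)`. A closed ball
of radius `< δ` centred in `fᵐ(X)`, `m ≥ n₁`, is connected and misses `Δ(f)`, so it lies in a
single piece `P i`, on which `f` contracts by `λ`; thus `f` maps it into the ball of `λ` times the
radius around the next orbit point. Choose `N ≥ n₁` with `λᴺ · diam X < δ`. For an atom `Q` of
`P(fᴺ)` and `x₀ ∈ Q`, the set `closure (fᴺ(Q))` lies in such a ball around `fᴺ(x₀)`, and its images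
under `f, …, f^{N-1}` stay in the shrinking balls around `f^{N+j}(x₀)`, each inside one piece: this
itinerary is an atom of `P(fᴺ)` containing `closure (fᴺ(Q))`.
-/

open Filter

theorem IsPreconnected.subset_of_subset_iUnion {α ι : Type*} [TopologicalSpace α]
    {s : Set α} {U : ι → Set α} (hs : IsPreconnected s) (hU : ∀ i, IsOpen (U i))
    (hdisj : Pairwise (Disjoint on U)) (hsU : s ⊆ ⋃ i, U i) {i₀ : ι}
    (hs₀ : (s ∩ U i₀).Nonempty) : s ⊆ U i₀ := by
  refine hs.subset_left_of_subset_union (hU i₀)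
    (isOpen_biUnion (s := {i | i ≠ i₀}) fun i _ => hU i) ?_ ?_ hs₀
  · exact disjoint_iUnion₂_right.2 fun i hi => hdisj (Ne.symm hi)
  · intro x hx
    obtain ⟨i, hi⟩ := mem_iUnion.1 (hsU hx)
    by_cases h : i = i₀
    · exact Or.inl (h ▸ hi)
    · exact Or.inr (mem_biUnion h hi)

namespace PWC

variable {d : ℕ} {X : Set (Euc d)} (f : PWC d X)

theorem isClosed_delta (hmax : f.IsMaximal) : IsClosed f.Delta :=
  hmax ▸ isClosed_iUnion_of_finite fun _ => isClosed_frontier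

theorem iterate_image_subset_of_le {m n : ℕ} (hmn : m ≤ n) :
    f.map^[n] '' X ⊆ f.map^[m] '' X := by
  obtain ⟨k, rfl⟩ := Nat.exists_eq_add_of_le hmn
  rw [iterate_add, image_comp]
  exact image_mono (f.mapsTo.iterate k).image_subset

theorem exists_subset_P_of_isPreconnected (hmax : f.IsMaximal) {S : Set (Euc d)}
    (hS : IsPreconnected S) (hSX : (S ∩ X).Nonempty) (hSΔ : Disjoint S f.Delta) :
    ∃ i, S ⊆ f.P i := by
  have hfrX : Disjoint S (frontier X) := hSΔ.mono_right subset_union_right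
  have hfrP : ∀ i, Disjoint S (frontier (f.P i)) := fun i =>
    hSΔ.mono_right (hmax ▸ subset_iUnion (fun j => frontier (f.P j)) i)
  have hSint : S ⊆ interior X := by
    obtain ⟨y, hyS, hyX⟩ := hSX
    refine hS.subset_left_of_subset_union isOpen_interior isClosed_closure.isOpen_compl
      (disjoint_compl_right.mono_left interior_subset_closure) (fun b hb => ?_)
      ⟨y, hyS, ?_⟩
    · by_cases hb' : b ∈ closure X
      · rw [closure_eq_interior_union_frontier] at hb'
        exact hb'.imp_right fun hfr => absurd hfr (disjoint_left.1 hfrX hb)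
      · exact Or.inr hb'
    · have hy := subset_closure hyX
      rw [closure_eq_interior_union_frontier] at hy
      exact hy.resolve_right (disjoint_left.1 hfrX hyS)
  have hcover : S ⊆ ⋃ i, f.P i := by
    intro b hb
    have hbX : b ∈ ⋃ i, closure (f.P i) := f.cover_eq ▸ interior_subset (hSint hb)
    obtain ⟨i, hbi⟩ := mem_iUnion.1 hbX
    rw [closure_eq_interior_union_frontier, (f.P_open i).interior_eq] at hbi
    exact mem_iUnion.2 ⟨i, hbi.resolve_right (disjoint_left.1 (hfrP i) hb)⟩
  obtain ⟨y, hyS, -⟩ := hSX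
  obtain ⟨i, hyi⟩ := mem_iUnion.1 (hcover hyS)
  exact ⟨i, hS.subset_of_subset_iUnion f.P_open f.P_disjoint hcover
    ⟨y, hyS, hyi⟩⟩

theorem exists_ball_disjoint_delta (hX : IsCompact X) (hmax : f.IsMaximal)
    (h : f.att ∩ f.Delta = ∅) :
    ∃ n₁, ∃ δ > 0, ∀ m ≥ n₁, ∀ x ∈ X, Disjoint (ball (f.map^[m] x) δ) f.Delta := by
  set K : ℕ → Set (Euc d) := fun n => closure (f.map^[n] '' X)
  have hK : ∀ n, IsCompact (K n) := fun n =>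
    hX.of_isClosed_subset isClosed_closure
      (closure_minimal (f.mapsTo.iterate n).image_subset hX.isClosed)
  obtain ⟨n₁, hn₁⟩ : ∃ n₁, K n₁ ⊆ f.Deltaᶜ :=
    exists_subset_nhds_of_isCompact'
      (Antitone.directed_ge fun m n hmn => closure_mono (f.iterate_image_subset_of_le hmn))
      hK (fun _ => isClosed_closure) fun x hx =>
        (f.isClosed_delta hmax).isOpen_compl.mem_nhds fun hxΔ =>
          (eq_empty_iff_forall_notMem.1 h) x ⟨hx, hxΔ⟩
  obtain ⟨δ, hδ, hthick⟩ :=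
    (hK n₁).exists_thickening_subset_open (f.isClosed_delta hmax).isOpen_compl hn₁
  refine ⟨n₁, δ, hδ, fun m hm x hx => subset_compl_iff_disjoint_right.1 ?_⟩
  refine (ball_subset_thickening ?_ δ).trans hthick
  exact subset_closure (f.iterate_image_subset_of_le hm (mem_image_of_mem _ hx))

theorem dist_iterate_le_of_itinerary {x y : Euc d} {n : ℕ}
    (h : ∀ k < n, ∃ i, f.map^[k] x ∈ f.P i ∧ f.map^[k] y ∈ f.P i) :
    dist (f.map^[n] x) (f.map^[n] y) ≤ f.lam ^ n * dist x y := by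
  induction n with
  | zero => simp
  | succ n ih =>
    obtain ⟨i, hxi, hyi⟩ := h n n.lt_succ_self
    rw [iterate_succ_apply', iterate_succ_apply']
    calc dist (f.map (f.map^[n] x)) (f.map (f.map^[n] y))
        ≤ f.lam * dist (f.map^[n] x) (f.map^[n] y) := f.contracts i _ hxi _ hyi
      _ ≤ f.lam * (f.lam ^ n * dist x y) :=
          mul_le_mul_of_nonneg_left (ih fun k hk => h k (hk.trans n.lt_succ_self)) f.lam_pos.le
      _ = f.lam ^ (n + 1) * dist x y := by ring

theorem image_closedBall_subset {y : Euc d} {r : ℝ} {i : Fin f.m}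
    (hP : closedBall y r ⊆ f.P i) :
    f.map '' closedBall y r ⊆ closedBall (f.map y) (f.lam * r) := by
  rintro _ ⟨z, hz, rfl⟩
  have hy : y ∈ closedBall y r := mem_closedBall_self (dist_nonneg.trans hz)
  calc dist (f.map z) (f.map y) ≤ f.lam * dist z y := f.contracts i _ (hP hz) _ (hP hy)
    _ ≤ f.lam * r := mul_le_mul_of_nonneg_left hz f.lam_pos.le

theorem iterate_image_closedBall_subset {c : Euc d} {r : ℝ} {n : ℕ}
    (hP : ∀ j < n, ∃ i, closedBall (f.map^[j] c) (f.lam ^ j * r) ⊆ f.P i) :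
    f.map^[n] '' closedBall c r ⊆ closedBall (f.map^[n] c) (f.lam ^ n * r) := by
  induction n with
  | zero => simp
  | succ n ih =>
    obtain ⟨i, hi⟩ := hP n n.lt_succ_self
    rw [iterate_succ', image_comp, comp_apply, pow_succ', mul_assoc]
    exact (image_mono (ih fun j hj => hP j (hj.trans n.lt_succ_self))).trans
      (f.image_closedBall_subset hi)

theorem exists_mem_partN_superset {N : ℕ} {C : Set (Euc d)} (hC : C.Nonempty)
    (hP : ∀ j < N, ∃ i, f.map^[j] '' C ⊆ f.P i) : ∃ Q ∈ f.partN N, C ⊆ Q := by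
  choose v hv using hP
  have hCsub : C ⊆ ⋂ j : Fin N, f.map^[(j : ℕ)] ⁻¹' f.P (v j j.2) := fun x hx =>
    mem_iInter.2 fun j => hv j j.2 (mem_image_of_mem _ hx)
  exact ⟨_, ⟨hC.mono hCsub, fun j => v j j.2, rfl⟩, hCsub⟩

theorem stabilisesAt_of_closedBall_subset (hX : Bornology.IsBounded X) {N : ℕ} (hN : 0 < N)
    (hP : ∀ m ≥ N, ∀ x ∈ X, ∃ i, closedBall (f.map^[m] x) (f.lam ^ m * diam X) ⊆ f.P i) :
    f.StabilisesAt N := by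
  rintro Q ⟨⟨x₀, hx₀⟩, w, hQ⟩
  have hmem : ∀ x ∈ Q, ∀ k (hk : k < N), f.map^[k] x ∈ f.P (w ⟨k, hk⟩) :=
    fun x hx k hk => mem_iInter.1 (hQ ▸ hx) ⟨k, hk⟩
  have hx₀X : x₀ ∈ X := f.P_subset _ (hmem x₀ hx₀ 0 hN)
  have hball : closure (f.map^[N] '' Q) ⊆ closedBall (f.map^[N] x₀) (f.lam ^ N * diam X) := by
    refine closure_minimal ?_ isClosed_closedBall
    rintro _ ⟨x, hx, rfl⟩
    calc dist (f.map^[N] x) (f.map^[N] x₀) ≤ f.lam ^ N * dist x x₀ :=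
          f.dist_iterate_le_of_itinerary fun k hk => ⟨_, hmem x hx k hk, hmem x₀ hx₀ k hk⟩
      _ ≤ f.lam ^ N * diam X := mul_le_mul_of_nonneg_left
          (dist_le_diam_of_mem hX (f.P_subset _ (hmem x hx 0 hN)) hx₀X)
          (pow_nonneg f.lam_pos.le N)
  refine f.exists_mem_partN_superset ((Set.Nonempty.image _ ⟨x₀, hx₀⟩).closure)
    fun j hj => ?_
  obtain ⟨i, hi⟩ := hP (j + N) (N.le_add_left j) x₀ hx₀X
  refine ⟨i, (image_mono hball).trans ((f.iterate_image_closedBall_subset fun k hk => ?_).trans ?_)⟩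
  · obtain ⟨i', hi'⟩ := hP (k + N) (N.le_add_left k) x₀ hx₀X
    exact ⟨i', by rwa [← iterate_add_apply, ← mul_assoc, ← pow_add]⟩
  · rwa [← iterate_add_apply, ← mul_assoc, ← pow_add]

end PWC

/-- If the attractor of a piecewise contraction (with its
maximal partition) is disjoint from the discontinuity set, then `f` is Markov. -/
theorem markov_of_attractor_disjoint_delta {d : ℕ} {X : Set (Euc d)}
    (hX : IsCompact X) (f : PWC d X) (hmax : f.IsMaximal)
    (h : f.att ∩ f.Delta = ∅) : f.Markov := by
  obtain ⟨n₁, δ, hδ, hball⟩ := f.exists_ball_disjoint_delta hX hmax h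
  have hsmall : Tendsto (fun m => f.lam ^ m * diam X) atTop (𝓝 0) := by
    simpa using (tendsto_pow_atTop_nhds_zero_of_lt_one f.lam_pos.le f.lam_lt_one).mul_const
      (diam X)
  obtain ⟨N, hN⟩ := eventually_atTop.1
    ((hsmall.eventually (gt_mem_nhds hδ)).and (eventually_ge_atTop (n₁ + 1)))
  have hNpos : 0 < N := (hN N le_rfl).2.trans_lt' n₁.succ_pos
  refine ⟨N, hNpos, f.stabilisesAt_of_closedBall_subset hX.isBounded hNpos fun m hm x hx => ?_⟩
  have hr : 0 ≤ f.lam ^ m * diam X := by have := f.lam_pos; positivity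
  exact f.exists_subset_P_of_isPreconnected hmax (convex_closedBall _ _).isPreconnected
    ⟨_, mem_closedBall_self hr, f.mapsTo.iterate m hx⟩
    ((hball m (n₁.le_succ.trans (hN m hm).2) x hx).mono_left (closedBall_subset_ball (hN m hm).1))
end

section
/- Let f be a Markov piecewise contraction with maximal partition P(f) and stabilisation time N. Then for every P ∈ P(fᴺ) there exists Q ∈ P(fᴺ) such that f(P) ⊂ Q. -/
open Set Metric Topology Function
open scoped ENNReal

noncomputable section

attribute [local instance] Classical.propDecidable

end

section Itinerary

variable {α ι : Type*} (g : α → α) (P : ι → Set α)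

def itinerarySet {n : ℕ} (w : Fin n → ι) : Set α :=
  ⋂ j : Fin n, g^[(j : ℕ)] ⁻¹' P (w j)

variable {g P}

theorem mem_itinerarySet {n : ℕ} {w : Fin n → ι} {x : α} :
    x ∈ itinerarySet g P w ↔ ∀ j : Fin n, g^[(j : ℕ)] x ∈ P (w j) := by
  simp only [itinerarySet, mem_iInter, mem_preimage]

theorem itinerarySet_subset_head {n : ℕ} (w : Fin (n + 1) → ι) :
    itinerarySet g P w ⊆ P (w 0) :=
  fun _ hx => mem_itinerarySet.1 hx 0

theorem mapsTo_itinerarySet_snoc_tail {n : ℕ} (w : Fin (n + 1) → ι) (a : ι) :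
    MapsTo g (itinerarySet g P w ∩ g^[n + 1] ⁻¹' P a)
      (itinerarySet g P (Fin.snoc (Fin.tail w) a : Fin (n + 1) → ι)) := by
  rintro x ⟨hx, hxa⟩
  refine mem_itinerarySet.2 fun j => ?_
  rw [← iterate_succ_apply]
  induction j using Fin.lastCases with
  | last => rw [Fin.snoc_last]; exact hxa
  | cast i => rw [Fin.snoc_castSucc]; exact mem_itinerarySet.1 hx i.succ

end Itinerary

namespace PWC

variable {d : ℕ} {X : Set (Euc d)} (f : PWC d X)

theorem mem_partN {n : ℕ} {Q : Set (Euc d)} :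
    Q ∈ f.partN n ↔ Q.Nonempty ∧ ∃ w : Fin n → Fin f.m, Q = itinerarySet f.map f.P w :=
  Iff.rfl

variable {f}

/-- The last letter of the itinerary of `f(Q)` is the first letter of the element of
`P(f^(n+1))` that contains `f^(n+1)(Q)`. -/
theorem StabilisesAt.exists_image_subset {n : ℕ} (h : f.StabilisesAt (n + 1))
    {Q : Set (Euc d)} (hQ : Q ∈ f.partN (n + 1)) :
    ∃ Q' ∈ f.partN (n + 1), f.map '' Q ⊆ Q' := by
  obtain ⟨Q', hQ', hclosure⟩ := h Q hQ
  obtain ⟨hne, w, rfl⟩ := f.mem_partN.1 hQ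
  obtain ⟨-, w', rfl⟩ := f.mem_partN.1 hQ'
  have hmaps : MapsTo f.map (itinerarySet f.map f.P w)
      (itinerarySet f.map f.P (Fin.snoc (Fin.tail w) (w' 0) : Fin (n + 1) → Fin f.m)) :=
    (mapsTo_itinerarySet_snoc_tail w (w' 0)).mono_left fun x hx =>
      ⟨hx, itinerarySet_subset_head w' (hclosure (subset_closure (mem_image_of_mem _ hx)))⟩
  exact ⟨_, f.mem_partN.2 ⟨(hne.image _).mono hmaps.image_subset, _, rfl⟩, hmaps.image_subset⟩

end PWC

theorem refined_partition_mapsTo_general {d : ℕ} {X : Set (Euc d)}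
    (f : PWC d X) (N : ℕ) (hN : f.IsStabTime N) :
    ∀ Q ∈ f.partN N, ∃ Q' ∈ f.partN N, f.map '' Q ⊆ Q' := by
  obtain ⟨hpos, hstab, -⟩ := hN
  obtain ⟨n, rfl⟩ : ∃ n, N = n + 1 := ⟨N - 1, by omega⟩
  exact fun Q hQ => hstab.exists_image_subset hQ

/-- If `f` is a Markov piecewise contraction with stabilisation
time `N`, then `f` maps each element of `P(f^N)` into an element of `P(f^N)`. -/
theorem refined_partition_mapsTo {d : ℕ} {X : Set (Euc d)} (hX : IsCompact X)
    (f : PWC d X) (hmax : f.IsMaximal) (N : ℕ) (hN : f.IsStabTime N) :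
    ∀ Q ∈ f.partN N, ∃ Q' ∈ f.partN N, f.map '' Q ⊆ Q' :=
  refined_partition_mapsTo_general f N hN
end
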